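/- arXiv:2509.15498 — 3 statements merged into one kernel-verified Lean document; each statement's English description precedes it below -/
import Mathlib

section
/- Let p = softmax(z) and q = softmax(z+b) on ℝ^n with ‖b‖_∞ ≤ ε. Then the total variation distance (1/2)∑_i |q_i - p_i| is at most tanh(ε). -/
noncomputable def softmax {n : ℕ} (z : Fin n → ℝ) : Fin n → ℝ :=
  fun i => Real.exp (z i) / ∑ j, Real.exp (z j)

theorem softmax_tv_bound {n : ℕ} (hn : 1 ≤ n)
    (z b : Fin n → ℝ) (ε : ℝ) (hε : 0 ≤ ε)
    (hb : ∀ i, |b i| ≤ ε) :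
    (1 / 2) * ∑ i, |softmax (fun j => z j + b j) i - softmax z i| ≤ Real.tanh ε := by
  have hne : Nonempty (Fin n) := ⟨⟨0, hn⟩⟩
  set p := softmax z with hp
  set q := softmax (fun j => z j + b j) with hq
  set S := ∑ j, Real.exp (z j) with hS
  set T := ∑ j, Real.exp (z j + b j) with hT
  have hSpos : 0 < S := Finset.sum_pos (fun j _ => Real.exp_pos _) Finset.univ_nonempty
  have hTpos : 0 < T := Finset.sum_pos (fun j _ => Real.exp_pos _) Finset.univ_nonempty
  have hee : Real.exp ε * Real.exp (-ε) = 1 := by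
    rw [← Real.exp_add]; simp
  have hTle : T ≤ Real.exp ε * S := by
    rw [hT, hS, Finset.mul_sum]
    apply Finset.sum_le_sum
    intro j _
    rw [Real.exp_add]
    have h1 : Real.exp (b j) ≤ Real.exp ε := Real.exp_le_exp.2 ((abs_le.1 (hb j)).2)
    nlinarith [Real.exp_pos (z j)]
  have hTge : Real.exp (-ε) * S ≤ T := by
    rw [hT, hS, Finset.mul_sum]
    apply Finset.sum_le_sum
    intro j _
    rw [Real.exp_add]
    have h1 : Real.exp (-ε) ≤ Real.exp (b j) := Real.exp_le_exp.2 ((abs_le.1 (hb j)).1)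
    nlinarith [Real.exp_pos (z j)]
  have hub : ∀ i, q i ≤ Real.exp (2*ε) * p i := by
    intro i
    have hq' : q i = Real.exp (z i) * Real.exp (b i) / T := by
      rw [hq]; simp only [softmax]; rw [← hT, Real.exp_add]
    have hp' : p i = Real.exp (z i) / S := by simp [hp, softmax, ← hS]
    have h1 : Real.exp (b i) ≤ Real.exp ε := Real.exp_le_exp.2 ((abs_le.1 (hb i)).2)
    have h2 : Real.exp (2*ε) = Real.exp ε * Real.exp ε := by
      rw [← Real.exp_add]; ring_nf
    have hSle : S ≤ Real.exp ε * T := by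
      nlinarith [Real.exp_pos ε]
    have hpz := Real.exp_pos (z i)
    rw [hq', hp', h2, mul_div_assoc', div_le_div_iff₀ hTpos hSpos]
    nlinarith [mul_nonneg (mul_nonneg (sub_nonneg.2 h1) hSpos.le) hpz.le,
      mul_nonneg (mul_nonneg (sub_nonneg.2 hSle) (Real.exp_pos ε).le) hpz.le]
  have hlb : ∀ i, Real.exp (-(2*ε)) * p i ≤ q i := by
    intro i
    have hq' : q i = Real.exp (z i) * Real.exp (b i) / T := by
      rw [hq]; simp only [softmax]; rw [← hT, Real.exp_add]
    have hp' : p i = Real.exp (z i) / S := by simp [hp, softmax, ← hS]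
    have h1 : Real.exp (-ε) ≤ Real.exp (b i) := Real.exp_le_exp.2 ((abs_le.1 (hb i)).1)
    have h2 : Real.exp (-(2*ε)) = Real.exp (-ε) * Real.exp (-ε) := by
      rw [← Real.exp_add]; ring_nf
    have hTle' : Real.exp (-ε) * T ≤ S := by
      nlinarith [Real.exp_pos (-ε)]
    have hpz := Real.exp_pos (z i)
    rw [hq', hp', h2, mul_div_assoc', div_le_div_iff₀ hSpos hTpos]
    nlinarith [mul_nonneg (mul_nonneg (sub_nonneg.2 h1) hSpos.le) hpz.le,
      mul_nonneg (mul_nonneg (sub_nonneg.2 hTle') (Real.exp_pos (-ε)).le) hpz.le]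
  have hpnn : ∀ i, 0 ≤ p i := fun i => div_nonneg (Real.exp_pos _).le hSpos.le
  have hqnn : ∀ i, 0 ≤ q i := fun i => div_nonneg (Real.exp_pos _).le hTpos.le
  have hpsum : ∑ i, p i = 1 := by
    simp only [hp, softmax, ← hS]
    rw [← Finset.sum_div, ← hS, div_self hSpos.ne']
  have hqsum : ∑ i, q i = 1 := by
    simp only [hq, softmax, ← hT]
    rw [← Finset.sum_div, ← hT, div_self hTpos.ne']
  set P := Finset.univ.filter (fun i => p i ≤ q i) with hP
  set A := ∑ i ∈ P, p i with hA
  set t := ∑ i ∈ P, (q i - p i) with ht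
  have hsplit : ∀ f : Fin n → ℝ, ∑ i, f i = ∑ i ∈ P, f i + ∑ i ∈ Pᶜ, f i := by
    intro f
    rw [add_comm, Finset.sum_compl_add_sum]
  have hteq : t = ∑ i ∈ Pᶜ, (p i - q i) := by
    have h1 := hsplit (fun i => q i - p i)
    have h2 : ∑ i, (q i - p i) = 0 := by
      rw [Finset.sum_sub_distrib, hpsum, hqsum]; ring
    rw [h2] at h1
    have h3 : ∑ i ∈ Pᶜ, (p i - q i) = - ∑ i ∈ Pᶜ, (q i - p i) := by
      rw [← Finset.sum_neg_distrib]; congr 1; ext i; ring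
    simp only [ht]
    linarith [h3, h1]
  have habs : ∑ i, |q i - p i| = 2 * t := by
    rw [hsplit (fun i => |q i - p i|)]
    have h1 : ∑ i ∈ P, |q i - p i| = t := by
      apply Finset.sum_congr rfl
      intro i hi
      rw [hP, Finset.mem_filter] at hi
      rw [abs_of_nonneg (by linarith [hi.2])]
    have h2 : ∑ i ∈ Pᶜ, |q i - p i| = ∑ i ∈ Pᶜ, (p i - q i) := by
      apply Finset.sum_congr rfl
      intro i hi
      rw [Finset.mem_compl, hP, Finset.mem_filter] at hi
      push_neg at hi
      have := hi (Finset.mem_univ i)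
      rw [abs_of_nonpos (by linarith)]; ring
    rw [h1, h2, ← hteq]; ring
  set a := Real.exp (2*ε) - 1 with ha
  set c := 1 - Real.exp (-(2*ε)) with hc
  have hta : t ≤ a * A := by
    rw [ht, hA, Finset.mul_sum]
    apply Finset.sum_le_sum
    intro i _
    have h1 := hub i
    have h2 := hpnn i
    rw [ha]; nlinarith
  have hA1 : ∑ i ∈ Pᶜ, p i = 1 - A := by
    have h := hsplit p
    rw [hpsum] at h
    rw [hA]; linarith
  have htc : t ≤ c * (1 - A) := by
    rw [hteq, ← hA1, Finset.mul_sum]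
    apply Finset.sum_le_sum
    intro i _
    have h1 := hlb i
    have h2 := hpnn i
    rw [hc]; nlinarith
  have hAnn : 0 ≤ A := Finset.sum_nonneg (fun i _ => hpnn i)
  have hA1' : A ≤ 1 := by
    have h := Finset.sum_nonneg (fun i (_ : i ∈ Pᶜ) => hpnn i)
    linarith [hA1]
  clear_value t A a c
  have key : t ≤ Real.tanh ε := by
    rcases eq_or_lt_of_le hε with hε0 | hεpos
    · have ha0 : a = 0 := by rw [ha, ← hε0]; simp
      have ht0 : Real.tanh ε = 0 := by rw [← hε0]; simp
      rw [ha0, zero_mul] at hta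
      rw [ht0]; linarith
    · have hee' : Real.exp ε * Real.exp (-ε) = 1 := hee
      have h2a : a = (Real.exp ε - Real.exp (-ε)) * Real.exp ε := by
        rw [ha, show (2:ℝ)*ε = ε + ε by ring, Real.exp_add]
        linear_combination hee'
      have h2c : c = (Real.exp ε - Real.exp (-ε)) * Real.exp (-ε) := by
        rw [hc, show -((2:ℝ)*ε) = -ε + -ε by ring, Real.exp_add]
        linear_combination -hee'
      have hed : 0 < Real.exp ε - Real.exp (-ε) := by
        rw [sub_pos]
        exact Real.exp_lt_exp.2 (by linarith)
      have hapos : 0 < a := by rw [h2a]; positivity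
      have hcpos : 0 < c := by rw [h2c]; positivity
      have hsum : (a + c) * t ≤ a * c := by
        have h1 : c * t ≤ c * (a * A) := mul_le_mul_of_nonneg_left hta hcpos.le
        have h2 : a * t ≤ a * (c * (1 - A)) := mul_le_mul_of_nonneg_left htc hapos.le
        calc (a + c) * t = c * t + a * t := by ring
          _ ≤ c * (a * A) + a * (c * (1 - A)) := add_le_add h1 h2
          _ = a * c := by ring
      have hac : a * c = (Real.exp ε - Real.exp (-ε)) ^ 2 := by
        rw [h2a, h2c]
        linear_combination (Real.exp ε - Real.exp (-ε)) ^ 2 * hee'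
      have hapc : a + c = (Real.exp ε - Real.exp (-ε)) * (Real.exp ε + Real.exp (-ε)) := by
        rw [h2a, h2c]; ring
      have htanh : Real.tanh ε = (Real.exp ε - Real.exp (-ε)) / (Real.exp ε + Real.exp (-ε)) := by
        rw [Real.tanh_eq_sinh_div_cosh, Real.sinh_eq, Real.cosh_eq]
        field_simp
      rw [htanh, le_div_iff₀ (by positivity)]
      have h3 : (Real.exp ε - Real.exp (-ε)) * (t * (Real.exp ε + Real.exp (-ε))) ≤
          (Real.exp ε - Real.exp (-ε)) * (Real.exp ε - Real.exp (-ε)) := by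
        calc (Real.exp ε - Real.exp (-ε)) * (t * (Real.exp ε + Real.exp (-ε)))
            = (a + c) * t := by rw [hapc]; ring
          _ ≤ a * c := hsum
          _ = (Real.exp ε - Real.exp (-ε)) * (Real.exp ε - Real.exp (-ε)) := by rw [hac]; ring
      exact le_of_mul_le_mul_left h3 hed
  rw [habs]
  linarith
end

section
/- Let 0 < a ≤ 1 ≤ b with ab = 1, and suppose λ_i ∈ [a,b] for all i with ∑_i p_i λ_i = 1 where p is a probability vector. Then (1/2)∑_i p_i |λ_i - 1| ≤ (1-a)(b-1)/(b-a), with the convention that the bound is 0 when a = b = 1. -/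
theorem tv_extremal_bound {n : ℕ}
    (p lam : Fin n → ℝ) (a b : ℝ)
    (ha : 0 < a) (hab1 : a ≤ 1) (h1b : 1 ≤ b) (hab : a * b = 1)
    (hp : ∀ i, 0 ≤ p i) (hpsum : ∑ i, p i = 1)
    (hlam : ∀ i, a ≤ lam i ∧ lam i ≤ b)
    (hconstraint : ∑ i, p i * lam i = 1) :
    (1 / 2) * ∑ i, p i * |lam i - 1| ≤ (1 - a) * (b - 1) / (b - a) := by
  rcases eq_or_lt_of_le (hab1.trans h1b) with heq | hlt
  · -- a = b, hence a = b = 1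
    have ha1 : a = 1 := by nlinarith
    have hsum0 : ∑ i, p i * |lam i - 1| = 0 := by
      apply Finset.sum_eq_zero
      intro i _
      have h1 := (hlam i).1
      have h2 := (hlam i).2
      have hl1 : lam i = 1 := by rw [ha1] at h1; rw [← heq] at h2; linarith
      simp [hl1]
    rw [hsum0, ha1]
    simp
  · have hba : 0 < b - a := sub_pos.2 hlt
    have hsum : ∑ i, p i * |lam i - 1| = 2 * ∑ i, p i * max (1 - lam i) 0 := by
      have hcong : ∀ i ∈ Finset.univ,
          p i * |lam i - 1| = (p i * lam i - p i) + 2 * (p i * max (1 - lam i) 0) := by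
        intro i _
        rcases le_total (lam i) 1 with h | h
        · rw [abs_of_nonpos (by linarith), max_eq_left (by linarith)]; ring
        · rw [abs_of_nonneg (by linarith), max_eq_right (by linarith)]; ring
      rw [Finset.sum_congr rfl hcong, Finset.sum_add_distrib, Finset.sum_sub_distrib,
        hconstraint, hpsum, ← Finset.mul_sum]
      ring
    have key : ∑ i, p i * max (1 - lam i) 0 ≤ (1 - a) * (b - 1) / (b - a) := by
      have step : ∀ i, p i * max (1 - lam i) 0 ≤
          (1 - a) / (b - a) * (p i * b) - (1 - a) / (b - a) * (p i * lam i) := by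
        intro i
        have h1 := (hlam i).1; have h2 := (hlam i).2
        have hpt : max (1 - lam i) 0 ≤ (1 - a) * (b - lam i) / (b - a) := by
          rcases le_total (1 - lam i) 0 with h | h
          · rw [max_eq_right h]
            apply div_nonneg _ (le_of_lt hba)
            apply mul_nonneg (by linarith) (by linarith)
          · rw [max_eq_left h, le_div_iff₀ hba]
            nlinarith
        calc p i * max (1 - lam i) 0 ≤ p i * ((1 - a) * (b - lam i) / (b - a)) :=
              mul_le_mul_of_nonneg_left hpt (hp i)
          _ = (1 - a) / (b - a) * (p i * b) - (1 - a) / (b - a) * (p i * lam i) := by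
              field_simp
      calc ∑ i, p i * max (1 - lam i) 0
          ≤ ∑ i, ((1 - a) / (b - a) * (p i * b) - (1 - a) / (b - a) * (p i * lam i)) :=
            Finset.sum_le_sum fun i _ => step i
        _ = (1 - a) / (b - a) * ((∑ i, p i) * b) - (1 - a) / (b - a) * (∑ i, p i * lam i) := by
            rw [Finset.sum_sub_distrib, ← Finset.mul_sum, ← Finset.mul_sum, ← Finset.sum_mul]
        _ = (1 - a) * (b - 1) / (b - a) := by
            rw [hpsum, hconstraint]; ring
    rw [hsum]
    linarith
end

section
/- For probability vectors p, q ∈ Δ^n such that e^{-2ε} ≤ q_i/p_i ≤ e^{2ε} whenever p_i > 0 (and q_i = 0 when p_i = 0), the total variation distance satisfies (1/2)∑_i |q_i - p_i| ≤ (e^{2ε} - 1)/(e^{2ε} + 1). -/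
theorem tv_bound_from_ratio {n : ℕ} (hn : 1 ≤ n)
    (p q : Fin n → ℝ) (ε : ℝ) (hε : 0 ≤ ε)
    (hp : ∀ i, 0 ≤ p i) (hpsum : ∑ i, p i = 1)
    (hq : ∀ i, 0 ≤ q i) (hqsum : ∑ i, q i = 1)
    (hratio : ∀ i, 0 < p i →
      Real.exp (-2 * ε) ≤ q i / p i ∧ q i / p i ≤ Real.exp (2 * ε))
    (hzero : ∀ i, p i = 0 → q i = 0) :
    (1 / 2) * ∑ i, |q i - p i| ≤ (Real.exp (2 * ε) - 1) / (Real.exp (2 * ε) + 1) := by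
  set t := Real.exp (2 * ε) with ht
  have ht1 : 1 ≤ t := by
    rw [ht, show (1:ℝ) = Real.exp 0 from Real.exp_zero.symm]
    exact Real.exp_le_exp.mpr (by linarith)
  have htpos : 0 < t := lt_of_lt_of_le one_pos ht1
  have hinv : Real.exp (-2 * ε) = t⁻¹ := by
    rw [ht, ← Real.exp_neg]; ring_nf
  set S := Finset.univ.filter (fun i => p i ≤ q i) with hS
  have hupper : ∀ i, q i ≤ t * p i := by
    intro i
    rcases eq_or_lt_of_le (hp i) with h | h
    · rw [hzero i h.symm, ← h]; simp
    · have h2 := (hratio i h).2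
      rw [div_le_iff₀ h] at h2
      linarith [h2]
  have hlower : ∀ i, 0 < p i → p i ≤ t * q i := by
    intro i h
    have h1 := (hratio i h).1
    rw [hinv, le_div_iff₀ h] at h1
    have := mul_le_mul_of_nonneg_left h1 (le_of_lt htpos)
    calc p i = t * (t⁻¹ * p i) := by field_simp
    _ ≤ t * q i := this
  set D := ∑ i ∈ S, (q i - p i) with hD
  have hsplit : ∀ f : Fin n → ℝ, ∑ i ∈ S, f i + ∑ i ∈ Sᶜ, f i = ∑ i, f i := by
    intro f; exact Finset.sum_add_sum_compl S f
  have hzero' : ∑ i, (q i - p i) = 0 := by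
    rw [Finset.sum_sub_distrib, hpsum, hqsum]; ring
  have hD2 : ∑ i ∈ Sᶜ, (p i - q i) = D := by
    have := hsplit (fun i => q i - p i)
    rw [hzero'] at this
    have : ∑ i ∈ Sᶜ, (q i - p i) = -D := by linarith
    calc ∑ i ∈ Sᶜ, (p i - q i) = -∑ i ∈ Sᶜ, (q i - p i) := by
          rw [← Finset.sum_neg_distrib]; apply Finset.sum_congr rfl; intros; ring
    _ = D := by rw [this]; ring
  have hB1 : D ≤ (t - 1) * ∑ i ∈ S, p i := by
    rw [Finset.mul_sum]
    apply Finset.sum_le_sum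
    intro i _
    have := hupper i
    linarith
  have hB2 : t * D ≤ (t - 1) * ∑ i ∈ Sᶜ, p i := by
    rw [← hD2, Finset.mul_sum, Finset.mul_sum]
    apply Finset.sum_le_sum
    intro i hi
    have hi' : ¬ (p i ≤ q i) := by
      simp only [hS, Finset.mem_compl, Finset.mem_filter, Finset.mem_univ, true_and] at hi
      exact hi
    have hqp : q i < p i := lt_of_not_ge hi'
    have hppos : 0 < p i := lt_of_le_of_lt (hq i) hqp
    have := hlower i hppos
    nlinarith
  have hsum : ∑ i ∈ S, p i + ∑ i ∈ Sᶜ, p i = 1 := by rw [hsplit p, hpsum]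
  have hkey : D * (t + 1) ≤ t - 1 := by nlinarith
  have habs : ∑ i, |q i - p i| = 2 * D := by
    rw [← hsplit (fun i => |q i - p i|)]
    have e1 : ∑ i ∈ S, |q i - p i| = D := by
      apply Finset.sum_congr rfl
      intro i hi
      simp only [hS, Finset.mem_filter] at hi
      rw [abs_of_nonneg (by linarith [hi.2])]
    have e2 : ∑ i ∈ Sᶜ, |q i - p i| = D := by
      rw [← hD2]
      apply Finset.sum_congr rfl
      intro i hi
      simp only [hS, Finset.mem_compl, Finset.mem_filter, Finset.mem_univ, true_and] at hi
      rw [abs_of_nonpos (by linarith [lt_of_not_ge hi])]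
      ring
    rw [e1, e2]; ring
  rw [habs, le_div_iff₀ (by linarith : (0:ℝ) < t + 1)]
  linarith
end
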